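/- Let I=⟨A,∅,R,R?⟩ be an AtIAF, S⊆A a set of arguments such that S is not stable-co with respect to I, and r=(a,b)∈R? an attack with a∉S and b∈S. Then: (i) r∉RE⁺(I,S,(co,true)); and (ii) r∈RE⁻(I,S,(co,true)) if and only if a∉S⁺_I and PosVer_co(I−{(s,a)∈R? | s∈S}, S)=true. -/
import Mathlib


universe u

/-- An abstract argumentation framework: a set of arguments with an attack relation. -/
structure AF (α : Type u) where
  args : Set α
  att : Set (α × α)

namespace AF

variable {α : Type u}

/-- `S⁺_F`: arguments attacked by `S`. -/
def plusSet (F : AF α) (S : Set α) : Set α := {a | a ∈ F.args ∧ ∃ b ∈ S, (b, a) ∈ F.att}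

/-- `S⁻_F`: arguments attacking `S`. -/
def minusSet (F : AF α) (S : Set α) : Set α := {a | a ∈ F.args ∧ ∃ b ∈ S, (a, b) ∈ F.att}

/-- `S` is conflict-free in `F`. -/
def confFree (F : AF α) (S : Set α) : Prop := S ∩ F.plusSet S = ∅

/-- `S` defends `a` in `F`: every attacker of `a` is attacked by `S`. -/
def defends (F : AF α) (S : Set α) (a : α) : Prop := ∀ b, (b, a) ∈ F.att → b ∈ F.plusSet S

/-- The characteristic function `Γ_F(S)`: arguments defended by `S`. -/
def Γ (F : AF α) (S : Set α) : Set α := {a | a ∈ F.args ∧ F.defends S a}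

/-- Admissible: conflict-free and self-defending. -/
def isAd (F : AF α) (S : Set α) : Prop := S ⊆ F.args ∧ F.confFree S ∧ S ⊆ F.Γ S

/-- Stable: conflict-free and attacking exactly the outside. -/
def isSt (F : AF α) (S : Set α) : Prop := S ⊆ F.args ∧ F.confFree S ∧ F.plusSet S = F.args \ S

/-- Complete: admissible and containing all defended arguments. -/
def isCo (F : AF α) (S : Set α) : Prop := F.isAd S ∧ F.Γ S ⊆ S

/-- Grounded: ⊆-minimal complete. -/
def isGr (F : AF α) (S : Set α) : Prop := F.isCo S ∧ ∀ T, F.isCo T → T ⊆ S → T = S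

/-- Preferred: ⊆-maximal admissible. -/
def isPr (F : AF α) (S : Set α) : Prop := F.isAd S ∧ ∀ T, F.isAd T → S ⊆ T → S = T

end AF

/-- The five common semantics. -/
inductive Sem : Type
  | ad | st | co | gr | pr
deriving DecidableEq

/-- `S` is a `σ`-extension of `F`. -/
def extOf {α : Type u} : Sem → AF α → Set α → Prop
  | .ad => AF.isAd
  | .st => AF.isSt
  | .co => AF.isCo
  | .gr => AF.isGr
  | .pr => AF.isPr

/-- An incomplete argumentation framework (data part). -/
structure IAF (α : Type u) where
  A : Set α
  Aq : Set α
  R : Set (α × α)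
  Rq : Set (α × α)

namespace IAF

variable {α : Type u}

/-- Well-formedness: `A`,`A?` disjoint; `R`,`R?` disjoint subsets of `(A∪A?)×(A∪A?)`. -/
def WF (I : IAF α) : Prop :=
  Disjoint I.A I.Aq ∧ Disjoint I.R I.Rq ∧
  I.R ⊆ (I.A ∪ I.Aq) ×ˢ (I.A ∪ I.Aq) ∧
  I.Rq ⊆ (I.A ∪ I.Aq) ×ˢ (I.A ∪ I.Aq)

/-- `cert(I)`: the AF projected on the certain part. -/
def cert (I : IAF α) : AF α := ⟨I.A, I.R ∩ I.A ×ˢ I.A⟩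

/-- `I'` is a partial completion of `I`. -/
def PartOf (I' I : IAF α) : Prop :=
  I'.WF ∧ I.A ⊆ I'.A ∧ I'.A ⊆ I.A ∪ I.Aq ∧
  I.R ∩ (I'.A ∪ I'.Aq) ×ˢ (I'.A ∪ I'.Aq) ⊆ I'.R ∧
  I'.R ⊆ I.R ∪ I.Rq ∧ I'.Aq ⊆ I.Aq ∧ I'.Rq ⊆ I.Rq

/-- `F` is a completion of `I`. -/
def IsCompletion (I : IAF α) (F : AF α) : Prop := ∃ I' : IAF α, I'.PartOf I ∧ F = I'.cert

/-- `I + R₀` for a set of uncertain attacks. -/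
def addR (I : IAF α) (R0 : Set (α × α)) : IAF α := ⟨I.A, I.Aq, I.R ∪ R0, I.Rq \ R0⟩

/-- `I − R₀` for a set of uncertain attacks. -/
def subR (I : IAF α) (R0 : Set (α × α)) : IAF α := ⟨I.A, I.Aq, I.R, I.Rq \ R0⟩

/-- `I + A₀` for a set of uncertain arguments. -/
def addA (I : IAF α) (A0 : Set α) : IAF α := ⟨I.A ∪ A0, I.Aq \ A0, I.R, I.Rq⟩

/-- `I − A₀` for a set of uncertain arguments. -/
def subA (I : IAF α) (A0 : Set α) : IAF α :=
  ⟨I.A, I.Aq \ A0,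
   I.R \ {p | p ∈ I.R ∪ I.Rq ∧ (p.1 ∈ A0 ∨ p.2 ∈ A0)},
   I.Rq \ {p | p ∈ I.R ∪ I.Rq ∧ (p.1 ∈ A0 ∨ p.2 ∈ A0)}⟩

/-- `S⁺_I`. -/
def plusI (I : IAF α) (S : Set α) : Set α := {a | a ∈ I.A ∪ I.Aq ∧ ∃ b ∈ S, (b, a) ∈ I.R}

/-- `S⁻_I`. -/
def minusI (I : IAF α) (S : Set α) : Set α := {a | a ∈ I.A ∪ I.Aq ∧ ∃ b ∈ S, (a, b) ∈ I.R}

/-- `S^∼_I`. -/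
def simI (I : IAF α) (S : Set α) : Set α :=
  {a | a ∈ I.A ∪ I.Aq ∧ ∀ b ∈ S, (b, a) ∉ I.R ∪ I.Rq}

end IAF

/-- An element of an IAF: either an argument or an attack. -/
inductive Elem (α : Type u) : Type u
  | arg (a : α)
  | att (r : α × α)

/-- `e` is an uncertain element of `I`, i.e. `e ∈ A? ∪ R?`. -/
def IAF.isUnc {α : Type u} (I : IAF α) : Elem α → Prop
  | .arg a => a ∈ I.Aq
  | .att r => r ∈ I.Rq

/-- `I + {e}`. -/
def IAF.addE {α : Type u} (I : IAF α) : Elem α → IAF α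
  | .arg a => I.addA {a}
  | .att r => I.addR {r}

/-- `I − {e}`. -/
def IAF.subE {α : Type u} (I : IAF α) : Elem α → IAF α
  | .arg a => I.subA {a}
  | .att r => I.subR {r}

/-- `e` is the unique uncertain element of `I`, i.e. `A? ∪ R? = {e}`. -/
def onlyUnc {α : Type u} (I : IAF α) : Elem α → Prop
  | .arg a => I.Aq = {a} ∧ I.Rq = ∅
  | .att r => I.Aq = ∅ ∧ I.Rq = {r}

/-- A verification status: a semantics together with true/false. -/
abbrev VStatus := Sem × Bool

/-- `S` has verification status `j` in the AF `F`. -/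
def hasStatus {α : Type u} (F : AF α) (S : Set α) (j : VStatus) : Prop :=
  cond j.2 (extOf j.1 F S) (¬ extOf j.1 F S)

/-- `S` is stable-`j` w.r.t. `I`. -/
def IAF.stableJ {α : Type u} (I : IAF α) (S : Set α) (j : VStatus) : Prop :=
  ∀ F, I.IsCompletion F → hasStatus F S j

/-- `S` is stable-`σ` w.r.t. `I`. -/
def IAF.stableSem {α : Type u} (I : IAF α) (S : Set α) (σ : Sem) : Prop :=
  I.stableJ S (σ, true) ∨ I.stableJ S (σ, false)

/-- `RE⁺(I,S,j)`: uncertain elements whose addition is `j`-relevant for `S` w.r.t. `I`. -/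
def REplus {α : Type u} (I : IAF α) (S : Set α) (j : VStatus) : Set (Elem α) :=
  {e | I.isUnc e ∧ ∃ I' : IAF α, I'.PartOf I ∧ onlyUnc I' e ∧
    hasStatus (I'.addE e).cert S j ∧ ¬ hasStatus (I'.subE e).cert S j}

/-- `RE⁻(I,S,j)`: uncertain elements whose removal is `j`-relevant for `S` w.r.t. `I`. -/
def REminus {α : Type u} (I : IAF α) (S : Set α) (j : VStatus) : Set (Elem α) :=
  {e | I.isUnc e ∧ ∃ I' : IAF α, I'.PartOf I ∧ onlyUnc I' e ∧
    hasStatus (I'.subE e).cert S j ∧ ¬ hasStatus (I'.addE e).cert S j}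

/-- `e` is `σ`-irrelevant for `S` w.r.t. `I`. -/
def irrelevant {α : Type u} (I : IAF α) (S : Set α) (σ : Sem) (e : Elem α) : Prop :=
  e ∉ REplus I S (σ, true) ∧ e ∉ REminus I S (σ, true) ∧
  e ∉ REplus I S (σ, false) ∧ e ∉ REminus I S (σ, false)

/-- `PosVer_σ(I,S) = true`. -/
def PosVer {α : Type u} (σ : Sem) (I : IAF α) (S : Set α) : Prop :=
  ∃ F, I.IsCompletion F ∧ extOf σ F S

/-- `NecVer_σ(I,S) = true`. -/
def NecVer {α : Type u} (σ : Sem) (I : IAF α) (S : Set α) : Prop :=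
  ∀ F, I.IsCompletion F → extOf σ F S

/-- `SRE⁺(I,S,j)`: uncertain elements whose addition is strongly `j`-relevant. -/
def SREplus {α : Type u} (I : IAF α) (S : Set α) (j : VStatus) : Set (Elem α) :=
  {e | I.isUnc e ∧ ∀ I' : IAF α, I'.PartOf (I.subE e) → ¬ I'.stableJ S j}

/-- `SRE⁻(I,S,j)`: uncertain elements whose removal is strongly `j`-relevant. -/
def SREminus {α : Type u} (I : IAF α) (S : Set α) (j : VStatus) : Set (Elem α) :=
  {e | I.isUnc e ∧ ∀ I' : IAF α, I'.PartOf (I.addE e) → ¬ I'.stableJ S j}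

/-- The `OutRel(I,S,(a,b))` predicate. -/
def OutRel {α : Type u} (I : IAF α) (S : Set α) (r : α × α) : Prop :=
  (I.minusI {r.2} \ {r.1}) ∩ I.simI S = ∅ ∧
  PosVer Sem.co
    ((I.addR {p | p ∈ I.Rq ∧ p.1 ∈ S ∧ p.2 ∈ I.minusI {r.2} \ {r.1}}).subR
      {p | p ∈ I.Rq ∧ p.1 ≠ r.1 ∧ p.2 = r.2}) S



section Aux

variable {α : Type u}

lemma plus_eq (A : Set α) (T : Set (α × α)) (S : Set α) {r : α × α} (ha : r.1 ∉ S) :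
    (AF.mk A (T ∪ {r})).plusSet S = (AF.mk A T).plusSet S := by
  ext x
  constructor
  · rintro ⟨hx, c, hc, hca | hca⟩
    · exact ⟨hx, c, hc, hca⟩
    · rw [Set.mem_singleton_iff] at hca
      exact absurd ((congrArg Prod.fst hca) ▸ hc) ha
  · rintro ⟨hx, c, hc, hca⟩
    exact ⟨hx, c, hc, Or.inl hca⟩

lemma L1 (A : Set α) (T : Set (α × α)) (S : Set α) {r : α × α}
    (ha : r.1 ∉ S) (hb : r.2 ∈ S)
    (h : (AF.mk A (T ∪ {r})).isCo S) : (AF.mk A T).isCo S := by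
  obtain ⟨⟨hSA, hcf, hdef⟩, hcomp⟩ := h
  have hpe := plus_eq A T S ha
  refine ⟨⟨hSA, ?_, ?_⟩, ?_⟩
  · show S ∩ _ = ∅
    rw [← hpe]; exact hcf
  · intro x hx
    obtain ⟨hxA, hd⟩ := hdef hx
    refine ⟨hxA, fun c hc => ?_⟩
    rw [← hpe]; exact hd c (Or.inl hc)
  · rintro x ⟨hxA, hd⟩
    by_cases hxb : x = r.2
    · exact hxb ▸ hb
    · refine hcomp ⟨hxA, fun c hc => ?_⟩
      rcases hc with hc | hc
      · rw [hpe]; exact hd c hc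
      · rw [Set.mem_singleton_iff] at hc
        exact absurd (congrArg Prod.snd hc) hxb

lemma L2 (A : Set α) (T : Set (α × α)) (S : Set α) {r : α × α}
    (ha : r.1 ∉ S) (haP : r.1 ∈ (AF.mk A T).plusSet S)
    (h : (AF.mk A T).isCo S) : (AF.mk A (T ∪ {r})).isCo S := by
  obtain ⟨⟨hSA, hcf, hdef⟩, hcomp⟩ := h
  have hpe := plus_eq A T S ha
  refine ⟨⟨hSA, ?_, ?_⟩, ?_⟩
  · show S ∩ _ = ∅
    rw [hpe]; exact hcf
  · intro x hx
    obtain ⟨hxA, hd⟩ := hdef hx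
    refine ⟨hxA, fun c hc => ?_⟩
    rcases hc with hc | hc
    · rw [hpe]; exact hd c hc
    · rw [Set.mem_singleton_iff] at hc
      have hcr : c = r.1 := congrArg Prod.fst hc
      rw [hpe, hcr]
      exact haP
  · rintro x ⟨hxA, hd⟩
    refine hcomp ⟨hxA, fun c hc => ?_⟩
    rw [← hpe]; exact hd c (Or.inl hc)

lemma extract (I I' : IAF α) (r : α × α) (hWF : I.WF) (hAt : I.Aq = ∅)
    (hrq : r ∈ I.Rq) (hP : I'.PartOf I) (hO : onlyUnc I' (.att r)) :
    I'.A = I.A ∧ I.R ⊆ I'.R ∧ I'.R ⊆ I.R ∪ I.Rq ∧ r ∉ I'.R ∧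
    I'.R ⊆ I.A ×ˢ I.A ∧
    (I'.addE (.att r)).cert = AF.mk I.A (I'.R ∪ {r}) ∧
    (I'.subE (.att r)).cert = AF.mk I.A I'.R := by
  obtain ⟨hWF', hA1, hA2, hR1, hR2, hAq, hRq⟩ := hP
  obtain ⟨hAq', hRq'⟩ := hO
  have hA' : I'.A = I.A := by
    apply Set.Subset.antisymm
    · rwa [hAt, Set.union_empty] at hA2
    · exact hA1
  have hRsub : I'.R ⊆ I.A ×ˢ I.A := by
    have := hWF'.2.2.1
    rwa [hA', hAq', Set.union_empty] at this
  have hIR : I.R ⊆ I'.R := by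
    intro p hp
    apply hR1
    refine ⟨hp, ?_⟩
    have := hWF.2.2.1 hp
    rwa [hAt, Set.union_empty, ← hA', ← Set.union_empty I'.A, ← hAq'] at this
  have hrA : r ∈ I.A ×ˢ I.A := by
    have := hWF.2.2.2 hrq
    rwa [hAt, Set.union_empty] at this
  have hrn : r ∉ I'.R := by
    intro h
    exact Set.disjoint_left.mp hWF'.2.1 h (by rw [hRq']; rfl)
  refine ⟨hA', hIR, hR2, hrn, hRsub, ?_, ?_⟩
  · show AF.mk I'.A ((I'.R ∪ {r}) ∩ I'.A ×ˢ I'.A) = _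
    rw [hA']
    congr 1
    apply Set.inter_eq_left.mpr
    intro p hp
    rcases hp with hp | hp
    · exact hRsub hp
    · exact hp ▸ hrA
  · show AF.mk I'.A (I'.R ∩ I'.A ×ˢ I'.A) = _
    rw [hA']
    congr 1
    exact Set.inter_eq_left.mpr hRsub

end Aux

/-- `(co,true)`-relevance of an uncertain attack toward `S` from outside. -/
theorem stmt8 {α : Type u} (I : IAF α) (S : Set α) (r : α × α)
    (hWF : I.WF) (hAt : I.Aq = ∅) (hS : S ⊆ I.A)
    (hns : ¬ I.stableSem S Sem.co)
    (hr : r ∈ I.Rq) (ha : r.1 ∉ S) (hb : r.2 ∈ S) :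
    Elem.att r ∉ REplus I S (Sem.co, true) ∧
    (Elem.att r ∈ REminus I S (Sem.co, true) ↔
      r.1 ∉ I.plusI S ∧
      PosVer Sem.co (I.subR {p | p ∈ I.Rq ∧ p.1 ∈ S ∧ p.2 = r.1}) S) := by
  have hrA : r ∈ I.A ×ˢ I.A := by
    have := hWF.2.2.2 hr
    rwa [hAt, Set.union_empty] at this
  have haA : r.1 ∈ I.A := hrA.1
  constructor
  · rintro ⟨-, I', hP, hO, hplus, hminus⟩
    obtain ⟨hA', hIR, hRu, hrn, hRsub, hadd, hsub⟩ := extract I I' r hWF hAt hr hP hO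
    rw [hadd] at hplus
    rw [hsub] at hminus
    exact hminus (L1 I.A I'.R S ha hb hplus)
  constructor
  · rintro ⟨-, I', hP, hO, hminus, hplus⟩
    obtain ⟨hA', hIR, hRu, hrn, hRsub, hadd, hsub⟩ := extract I I' r hWF hAt hr hP hO
    rw [hadd] at hplus
    rw [hsub] at hminus
    have hminus' : (AF.mk I.A I'.R).isCo S := hminus
    have hap : r.1 ∉ (AF.mk I.A I'.R).plusSet S := fun h => hplus (L2 I.A I'.R S ha h hminus')
    constructor
    · rintro ⟨-, s, hsS, hsr⟩
      exact hap ⟨haA, s, hsS, hIR hsr⟩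
    · refine ⟨AF.mk I.A I'.R, ⟨⟨I.A, ∅, I'.R, ∅⟩, ?_, ?_⟩, hminus'⟩
      · refine ⟨⟨?_, ?_, ?_, ?_⟩, ?_, ?_, ?_, ?_, ?_, ?_⟩
        · exact Set.disjoint_empty _
        · exact Set.disjoint_empty _
        · simpa using hRsub
        · exact Set.empty_subset _
        · exact subset_rfl
        · exact Set.subset_union_left
        · exact fun p hp => hIR hp.1
        · intro p hp
          rcases hRu hp with h | h
          · exact Or.inl h
          · refine Or.inr ⟨h, ?_⟩
            rintro ⟨-, hsS, hp2⟩
            exact hap ⟨haA, p.1, hsS, by rw [← hp2]; exact hp⟩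
        · exact Set.empty_subset _
        · exact Set.empty_subset _
      · show _ = AF.mk I.A (I'.R ∩ I.A ×ˢ I.A)
        congr 1
        exact (Set.inter_eq_left.mpr hRsub).symm
  · rintro ⟨haa, F, ⟨I₂, hP2, hF2⟩, hco⟩
    obtain ⟨hWF2, hA1, hA2, hR1, hR2, hAq2, hRq2⟩ := hP2
    have hAq2' : I₂.Aq = ∅ := Set.subset_empty_iff.mp (hAt ▸ hAq2)
    have hA2' : I₂.A = I.A := by
      apply Set.Subset.antisymm
      · rwa [show (I.subR {p | p ∈ I.Rq ∧ p.1 ∈ S ∧ p.2 = r.1}).A = I.A from rfl,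
          show (I.subR {p | p ∈ I.Rq ∧ p.1 ∈ S ∧ p.2 = r.1}).Aq = I.Aq from rfl,
          hAt, Set.union_empty] at hA2
      · exact hA1
    have hRsub2 : I₂.R ⊆ I.A ×ˢ I.A := by
      have := hWF2.2.2.1
      rwa [hA2', hAq2', Set.union_empty] at this
    have hIR2 : I.R ⊆ I₂.R := by
      intro p hp
      apply hR1
      refine ⟨hp, ?_⟩
      have := hWF.2.2.1 hp
      rwa [hAt, Set.union_empty, ← hA2', ← Set.union_empty I₂.A, ← hAq2'] at this
    have hup : I₂.R ⊆ I.R ∪ (I.Rq \ {p | p ∈ I.Rq ∧ p.1 ∈ S ∧ p.2 = r.1}) := hR2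
    have hFeq : F = AF.mk I.A I₂.R := by
      rw [hF2]
      show AF.mk I₂.A (I₂.R ∩ I₂.A ×ˢ I₂.A) = _
      rw [hA2']
      congr 1
      exact Set.inter_eq_left.mpr hRsub2
    rw [hFeq] at hco
    have hco' : (AF.mk I.A I₂.R).isCo S := hco
    have hc1 : ((IAF.mk I.A ∅ (I₂.R \ {r}) {r}).subE (.att r)).cert
        = AF.mk I.A (I₂.R \ {r}) := by
      show AF.mk I.A ((I₂.R \ {r}) ∩ I.A ×ˢ I.A) = _
      congr 1
      exact Set.inter_eq_left.mpr (Set.diff_subset.trans hRsub2)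
    have hc2 : ((IAF.mk I.A ∅ (I₂.R \ {r}) {r}).addE (.att r)).cert
        = AF.mk I.A (I₂.R ∪ {r}) := by
      show AF.mk I.A (((I₂.R \ {r}) ∪ {r}) ∩ I.A ×ˢ I.A) = _
      rw [Set.diff_union_self]
      congr 1
      exact Set.inter_eq_left.mpr
        (Set.union_subset hRsub2 (Set.singleton_subset_iff.mpr hrA))
    refine ⟨hr, ⟨I.A, ∅, I₂.R \ {r}, {r}⟩, ?_, ⟨rfl, rfl⟩, ?_, ?_⟩
    · refine ⟨⟨?_, ?_, ?_, ?_⟩, ?_, ?_, ?_, ?_, ?_, ?_⟩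
      · exact Set.disjoint_empty _
      · exact Set.disjoint_singleton_right.mpr (fun h => h.2 rfl)
      · rw [Set.union_empty]; exact Set.diff_subset.trans hRsub2
      · rw [Set.union_empty]; exact Set.singleton_subset_iff.mpr hrA
      · exact subset_rfl
      · exact Set.subset_union_left
      · intro p hp
        refine ⟨hIR2 hp.1, fun he => ?_⟩
        exact Set.disjoint_left.mp hWF.2.1 hp.1 (he ▸ hr)
      · intro p hp
        rcases hup hp.1 with h | h
        · exact Or.inl h
        · exact Or.inr h.1
      · exact Set.empty_subset _
      · exact Set.singleton_subset_iff.mpr hr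
    · rw [hc1]
      show (AF.mk I.A (I₂.R \ {r})).isCo S
      by_cases hrm : r ∈ I₂.R
      · refine L1 I.A (I₂.R \ {r}) S ha hb ?_
        rw [Set.diff_union_self, Set.union_eq_left.mpr (Set.singleton_subset_iff.mpr hrm)]
        exact hco'
      · rw [Set.diff_singleton_eq_self hrm]
        exact hco'
    · rw [hc2]
      intro hC
      have hC' : (AF.mk I.A (I₂.R ∪ {r})).isCo S := hC
      obtain ⟨-, hd⟩ := hC'.1.2.2 hb
      obtain ⟨-, s, hsS, hsr⟩ := hd r.1 (Or.inr (show (r.1, r.2) ∈ ({r} : Set (α × α)) from Prod.mk.eta ▸ rfl))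
      rcases hsr with hsr | hsr
      · rcases hup hsr with h | h
        · exact haa ⟨Set.mem_union_left _ haA, s, hsS, h⟩
        · exact h.2 ⟨h.1, hsS, rfl⟩
      · rw [Set.mem_singleton_iff] at hsr
        have hs1 : s = r.1 := congrArg Prod.fst hsr
        exact ha (hs1 ▸ hsS)
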